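/- Let f and g be homogeneous polynomials of the same degree n in the variables X_1,…,X_d over ℂ and let U be a d×d unitary matrix. Then the Fischer inner product is invariant under the unitary change of variables: ⟨f∘U, g∘U⟩ = ⟨f, g⟩. -/

import Mathlib

open MvPolynomial

/-- The Fischer (Bombieri–Fock) inner product
`⟨f,g⟩ = Σ_α conj(c_α(f)) · c_α(g) · α!` where `α! = ∏ i (α i)!`;
it is conjugate-linear in the first argument. -/
noncomputable def fischer {d : ℕ} (f g : MvPolynomial (Fin d) ℂ) : ℂ :=
  ∑ α ∈ f.support ∪ g.support,
    (starRingEnd ℂ) (coeff α f) * coeff α g * (α.prod fun _ m => (m.factorial : ℂ))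

/-- The substitution `Xᵢ ↦ Σⱼ U i j • Xⱼ`, i.e. `f ∘ U`. -/
noncomputable def compU {d : ℕ} (U : Matrix (Fin d) (Fin d) ℂ) (f : MvPolynomial (Fin d) ℂ) :
    MvPolynomial (Fin d) ℂ :=
  aeval (fun i => ∑ j, U i j • (X j : MvPolynomial (Fin d) ℂ)) f

/-!
Write `⟨f, g⟩` as the constant term of `f̄(∂) g`, where `f̄` has the conjugated coefficients and
`p(∂)` substitutes `∂/∂Xᵢ` for `Xᵢ`: the constant term of `∂^α X^β` is `α!` if `α = β` and `0`
otherwise. The chain rule gives `p(∂)(g ∘ U) = ((p ∘ Uᵀ)(∂) g) ∘ U`. For `p = conj (f ∘ U) = f̄ ∘ Ū`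
we get `p ∘ Uᵀ = f̄ ∘ (Ū Uᵀ) = f̄` because `U` is unitary, and a linear substitution does not change
constant terms.
-/

open scoped Matrix

namespace MvPolynomial

variable {R σ : Type*} [CommSemiring R]

theorem pderiv_pderiv_comm (i j : σ) (p : MvPolynomial σ R) :
    pderiv i (pderiv j p) = pderiv j (pderiv i p) := by
  induction p using induction_on' with
  | monomial s a =>
    rcases eq_or_ne i j with rfl | hij
    · rfl
    · simp only [pderiv_monomial, Finsupp.tsub_apply, Finsupp.single_eq_of_ne hij,
        Finsupp.single_eq_of_ne hij.symm, Nat.sub_zero, tsub_right_comm (a := s)]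
      ring_nf
  | add p q hp hq => simp only [map_add, hp, hq]

theorem pderiv_pow_monomial (i : σ) (k : ℕ) (β : σ →₀ ℕ) (b : R) :
    ((pderiv i).toLinearMap ^ k) (monomial β b) =
      monomial (β - Finsupp.single i k) (b * (β i).descFactorial k) := by
  induction k with
  | zero => simp
  | succ k ih =>
    rw [pow_succ', Module.End.mul_apply, ih, Derivation.coeFn_coe, pderiv_monomial,
      Finsupp.tsub_apply, Finsupp.single_eq_same, tsub_tsub, ← Finsupp.single_add,
      Nat.descFactorial_succ, Nat.cast_mul]
    congr 1
    ring

open scoped IsMulCommutative in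
/-- `p ↦ p(∂)`, the differential operator with constant coefficients whose symbol is `p`. -/
noncomputable def diffOp : MvPolynomial σ R →ₐ[R] Module.End R (MvPolynomial σ R) :=
  let S : Set (Module.End R (MvPolynomial σ R)) := Set.range fun i ↦ (pderiv i).toLinearMap
  have : IsMulCommutative (Algebra.adjoin R S) := Algebra.isMulCommutative_adjoin R <| by
    rintro _ ⟨i, rfl⟩ _ ⟨j, rfl⟩
    exact LinearMap.ext fun p ↦ pderiv_pderiv_comm i j p
  (Algebra.adjoin R S).val.comp <|
    aeval fun i ↦ ⟨(pderiv i).toLinearMap, Algebra.subset_adjoin (Set.mem_range_self i)⟩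

@[simp]
theorem diffOp_X (i : σ) : diffOp (X i : MvPolynomial σ R) = (pderiv i).toLinearMap := by
  simp [diffOp]

theorem diffOp_monomial_monomial (α β : σ →₀ ℕ) (a b : R) :
    diffOp (monomial α a) (monomial β b) =
      monomial (β - α) (a * b * α.prod fun i k ↦ ((β i).descFactorial k : R)) := by
  induction α using Finsupp.induction generalizing β a b with
  | zero =>
    rw [monomial_zero', ← algebraMap_eq, AlgHom.commutes, Module.algebraMap_end_apply,
      smul_monomial, smul_eq_mul, tsub_zero, Finsupp.prod_zero_index, mul_one]
  | single_add i n α hi hn ih =>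
    have hdisj : Disjoint (Finsupp.single i n).support α.support := by
      rwa [Finsupp.support_single i hn, Finset.disjoint_singleton_left]
    have hsplit : monomial (Finsupp.single i n + α) a = X i ^ n * monomial α a := by
      rw [X_pow_eq_monomial, monomial_mul, one_mul]
    rw [hsplit, map_mul, map_pow, diffOp_X, Module.End.mul_apply, ih, pderiv_pow_monomial,
      Finsupp.tsub_apply, Finsupp.notMem_support_iff.mp hi, tsub_zero, tsub_tsub, add_comm α,
      Finsupp.prod_add_index_of_disjoint hdisj, Finsupp.prod_single_index (by simp)]
    congr 1
    ring

theorem constantCoeff_diffOp_monomial_monomial [DecidableEq σ] (α β : σ →₀ ℕ) (a b : R) :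
    constantCoeff (diffOp (monomial α a) (monomial β b)) =
      if α = β then a * b * α.prod fun _ k ↦ (k.factorial : R) else 0 := by
  rw [diffOp_monomial_monomial, constantCoeff_monomial]
  split_ifs with hle hαβ hαβ
  · subst hαβ
    exact congrArg _ <| Finsupp.prod_congr fun i _ ↦ by rw [Nat.descFactorial_self]
  · obtain ⟨i, hi⟩ := (Finsupp.lt_def.mp (lt_of_le_of_ne (tsub_eq_zero_iff_le.mp hle)
      (Ne.symm hαβ))).2
    have hi' : i ∈ α.support := Finsupp.mem_support_iff.mpr (by omega)
    exact mul_eq_zero_of_right _ <| Finset.prod_eq_zero hi' <| by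
      simp only [Nat.descFactorial_eq_zero_iff_lt.mpr hi, Nat.cast_zero]
  · exact absurd (hαβ ▸ tsub_self β) hle
  · rfl

theorem constantCoeff_diffOp [DecidableEq σ] (p q : MvPolynomial σ R) :
    constantCoeff (diffOp p q) =
      ∑ α ∈ p.support ∪ q.support, coeff α p * coeff α q * α.prod fun _ k ↦ (k.factorial : R) := by
  set s := p.support ∪ q.support
  have as_sum_of_support_subset (r : MvPolynomial σ R) (hr : r.support ⊆ s) :
      r = ∑ α ∈ s, monomial α (coeff α r) :=
    r.as_sum.trans <| Finset.sum_subset hr fun α _ hα ↦ by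
      rw [notMem_support_iff.mp hα, monomial_zero]
  calc constantCoeff (diffOp p q)
      = ∑ α ∈ s, ∑ β ∈ s,
          constantCoeff (diffOp (monomial α (coeff α p)) (monomial β (coeff β q))) := by
        conv_lhs => rw [as_sum_of_support_subset p Finset.subset_union_left,
          as_sum_of_support_subset q Finset.subset_union_right]
        simp only [map_sum, LinearMap.sum_apply]
        exact Finset.sum_comm
    _ = _ := Finset.sum_congr rfl fun α hα ↦ by
        simp only [constantCoeff_diffOp_monomial_monomial, Finset.sum_ite_eq, if_pos hα]

section LinearSubst

variable [Fintype σ]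

noncomputable def linearSubst (U : Matrix σ σ R) : MvPolynomial σ R →ₐ[R] MvPolynomial σ R :=
  aeval fun i ↦ ∑ j, U i j • X j

theorem linearSubst_X (U : Matrix σ σ R) (i : σ) : linearSubst U (X i) = ∑ j, U i j • X j :=
  aeval_X _ i

theorem linearSubst_linearSubst (V W : Matrix σ σ R) (p : MvPolynomial σ R) :
    linearSubst V (linearSubst W p) = linearSubst (W * V) p := by
  suffices (linearSubst V).comp (linearSubst W) = linearSubst (W * V) from
    AlgHom.congr_fun this p
  refine algHom_ext fun i ↦ ?_
  simp only [AlgHom.comp_apply, linearSubst_X, map_sum, map_smul, Matrix.mul_apply,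
    Finset.smul_sum, smul_smul, Finset.sum_smul]
  exact Finset.sum_comm

theorem linearSubst_one [DecidableEq σ] : linearSubst (1 : Matrix σ σ R) = AlgHom.id R _ :=
  algHom_ext fun i ↦ by simp [linearSubst_X, Matrix.one_apply, ite_smul]

theorem constantCoeff_linearSubst (U : Matrix σ σ R) (p : MvPolynomial σ R) :
    constantCoeff (linearSubst U p) = constantCoeff p := by
  suffices constantCoeff.comp (linearSubst U : MvPolynomial σ R →+* MvPolynomial σ R) =
      constantCoeff from RingHom.congr_fun this p
  refine ringHom_ext (fun a ↦ ?_) fun i ↦ ?_ <;> simp [linearSubst_X, smul_eq_C_mul]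

theorem map_linearSubst {S : Type*} [CommSemiring S] (φ : R →+* S) (U : Matrix σ σ R)
    (p : MvPolynomial σ R) :
    map φ (linearSubst U p) = linearSubst (U.map φ) (map φ p) := by
  suffices (map φ).comp (linearSubst U : MvPolynomial σ R →+* MvPolynomial σ R) =
      (linearSubst (U.map φ) : MvPolynomial σ S →+* MvPolynomial σ S).comp (map φ) from
    RingHom.congr_fun this p
  refine ringHom_ext (fun a ↦ ?_) fun i ↦ ?_ <;> simp [linearSubst_X, smul_eq_C_mul]

theorem pderiv_linearSubst (U : Matrix σ σ R) (j : σ) (p : MvPolynomial σ R) :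
    pderiv j (linearSubst U p) = ∑ i, U i j • linearSubst U (pderiv i p) := by
  classical
  induction p using induction_on with
  | C a => simp
  | add p q hp hq => simp only [map_add, hp, hq, smul_add, Finset.sum_add_distrib]
  | mul_X p k hp =>
    simp only [map_mul, pderiv_mul, hp, linearSubst_X, map_sum, Derivation.map_smul, pderiv_X,
      Pi.single_apply, map_add, mul_ite, mul_one, mul_zero, apply_ite (linearSubst U), map_zero,
      smul_ite, smul_zero, Finset.sum_ite_eq, Finset.sum_ite_eq', Finset.mem_univ, if_true,
      smul_add, Finset.sum_add_distrib, Finset.sum_mul, smul_mul_assoc, mul_smul_comm]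

theorem diffOp_linearSubst (U : Matrix σ σ R) (p q : MvPolynomial σ R) :
    diffOp p (linearSubst U q) = linearSubst U (diffOp (linearSubst Uᵀ p) q) := by
  induction p using induction_on generalizing q with
  | C a => simp [← algebraMap_eq]
  | add p₁ p₂ hp₁ hp₂ => simp only [map_add, LinearMap.add_apply, hp₁, hp₂]
  | mul_X p k hp =>
    simp only [map_mul, Module.End.mul_apply, diffOp_X, Derivation.coeFn_coe, pderiv_linearSubst,
      map_sum, map_smul, hp, linearSubst_X, Matrix.transpose_apply, LinearMap.sum_apply,
      LinearMap.smul_apply]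

end LinearSubst

end MvPolynomial

theorem Matrix.map_star_mul_transpose_of_mem_unitaryGroup {n α : Type*} [Fintype n]
    [DecidableEq n] [CommRing α] [StarRing α] {U : Matrix n n α}
    (hU : U ∈ Matrix.unitaryGroup n α) : U.map (starRingEnd α) * Uᵀ = 1 := by
  have h := congrArg Matrix.transpose (Matrix.mem_unitaryGroup_iff.mp hU)
  rwa [Matrix.transpose_mul, Matrix.transpose_one] at h

theorem fischer_eq_constantCoeff_diffOp {d : ℕ} (f g : MvPolynomial (Fin d) ℂ) :
    fischer f g = constantCoeff (diffOp (map (starRingEnd ℂ) f) g) := by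
  rw [constantCoeff_diffOp, fischer, support_map_of_injective f (RingHom.injective _)]
  simp only [coeff_map]

theorem fischer_compU_general (d : ℕ) (f g : MvPolynomial (Fin d) ℂ)
    (U : Matrix (Fin d) (Fin d) ℂ) (hU : U ∈ Matrix.unitaryGroup (Fin d) ℂ) :
    fischer (compU U f) (compU U g) = fischer f g := by
  change fischer (linearSubst U f) (linearSubst U g) = fischer f g
  rw [fischer_eq_constantCoeff_diffOp, fischer_eq_constantCoeff_diffOp, map_linearSubst,
    diffOp_linearSubst, linearSubst_linearSubst,
    Matrix.map_star_mul_transpose_of_mem_unitaryGroup hU, linearSubst_one, AlgHom.id_apply,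
    constantCoeff_linearSubst]

/-- The Fischer inner product of homogeneous polynomials of equal degree
is invariant under a unitary change of variables: `⟨f∘U, g∘U⟩ = ⟨f, g⟩`. -/
theorem fischer_compU (d n : ℕ) (f g : MvPolynomial (Fin d) ℂ)
    (hf : f.IsHomogeneous n) (hg : g.IsHomogeneous n)
    (U : Matrix (Fin d) (Fin d) ℂ) (hU : U ∈ Matrix.unitaryGroup (Fin d) ℂ) :
    fischer (compU U f) (compU U g) = fischer f g :=
  fischer_compU_general d f g U hU
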